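/- arXiv:2403.07138 — 3 statements merged into one kernel-verified Lean document; each statement's English description precedes it below -/
import Mathlib

section
/- Let G = C_p^r ⊕ C_q^s with r, s ≥ 1 and p > q primes. If S is a minimal zero-sum sequence over G with k(S) > max{ (1 + r(p−1))/p, (1 + s(q−1))/q }, then S contains an element of order pq. -/
open Multiset Pointwise

/-- Cross number of a sequence (multiset) over an additive group. -/
noncomputable def crossNum {G : Type*} [AddCommGroup G] (S : Multiset G) : ℚ :=
  (S.map (fun g => (1 : ℚ) / (addOrderOf g : ℚ))).sum

/-- A sequence is zero-sum free if no non-empty subsequence sums to zero. -/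
def IsZeroSumFree {G : Type*} [AddCommGroup G] (S : Multiset G) : Prop :=
  ∀ T : Multiset G, T ≤ S → T ≠ 0 → T.sum ≠ (0 : G)

/-- A minimal zero-sum sequence: non-trivial, sum zero, no proper non-trivial
zero-sum subsequence. -/
def IsMinZeroSum {G : Type*} [AddCommGroup G] (S : Multiset G) : Prop :=
  S ≠ 0 ∧ S.sum = 0 ∧ ∀ T : Multiset G, T < S → T ≠ 0 → T.sum ≠ (0 : G)

/-- `wSet G` : set of cross numbers of non-trivial zero-sum free sequences over `G`. -/
def wSet (G : Type*) [AddCommGroup G] : Set ℚ :=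
  { k | ∃ S : Multiset G, S ≠ 0 ∧ IsZeroSumFree S ∧ crossNum S = k }

/-- `WSet G` : set of cross numbers of minimal zero-sum sequences over `G`. -/
def WSet (G : Type*) [AddCommGroup G] : Set ℚ :=
  { k | ∃ S : Multiset G, IsMinZeroSum S ∧ crossNum S = k }


open MvPolynomial in

lemma davenport {α : Type*} (p r : ℕ) (hp : p.Prime)
    (φ : α → (Fin r → ZMod p)) (T : Multiset α)
    (hT : r * (p - 1) + 1 ≤ Multiset.card T) :
    ∃ U : Multiset α, U ≤ T ∧ U ≠ 0 ∧ (U.map φ).sum = 0 := by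
  haveI : Fact p.Prime := ⟨hp⟩
  obtain ⟨l, hl⟩ : ∃ l : List α, (l : Multiset α) = T := ⟨T.toList, T.coe_toList⟩
  set m := l.length with hm
  have hmT : m = Multiset.card T := by rw [hm, ← hl]; simp
  set g : Fin m → (Fin r → ZMod p) := fun i => φ (l.get i) with hg
  set f : Fin r → MvPolynomial (Fin m) (ZMod p) :=
    fun j => ∑ i : Fin m, MvPolynomial.C (g i j) * MvPolynomial.X i ^ (p - 1) with hf
  have hdeg : (∑ j : Fin r, (f j).totalDegree) < Fintype.card (Fin m) := by
    have h1 : ∀ j, (f j).totalDegree ≤ p - 1 := by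
      intro j
      refine (MvPolynomial.totalDegree_finset_sum _ _).trans ?_
      apply Finset.sup_le
      intro i _
      calc (MvPolynomial.C (g i j) * MvPolynomial.X i ^ (p-1)).totalDegree
          ≤ (MvPolynomial.C (g i j)).totalDegree + (MvPolynomial.X (R := ZMod p) i ^ (p-1)).totalDegree :=
            MvPolynomial.totalDegree_mul _ _
        _ ≤ p - 1 := by
            simp [MvPolynomial.totalDegree_X_pow]
    have h2 : (∑ j : Fin r, (f j).totalDegree) ≤ r * (p - 1) := by
      calc (∑ j : Fin r, (f j).totalDegree) ≤ ∑ _j : Fin r, (p-1) :=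
            Finset.sum_le_sum fun j _ => h1 j
        _ = r * (p-1) := by simp [Finset.sum_const, mul_comm]
    rw [Fintype.card_fin]
    omega
  have hdvd : p ∣ Fintype.card
      {x : Fin m → ZMod p // ∀ j : Fin r, MvPolynomial.eval x (f j) = 0} := by
    have := char_dvd_card_solutions_of_fintype_sum_lt (K := ZMod p) p hdeg
    convert this using 2
  have h0sol : ∀ j : Fin r, MvPolynomial.eval (0 : Fin m → ZMod p) (f j) = 0 := by
    intro j
    simp [hf, zero_pow (Nat.sub_ne_zero_of_lt hp.one_lt)]
  have hpos : 0 < Fintype.card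
      {x : Fin m → ZMod p // ∀ j : Fin r, MvPolynomial.eval x (f j) = 0} :=
    Fintype.card_pos_iff.mpr ⟨⟨0, h0sol⟩⟩
  have hge : 1 < Fintype.card
      {x : Fin m → ZMod p // ∀ j : Fin r, MvPolynomial.eval x (f j) = 0} :=
    lt_of_lt_of_le hp.one_lt (Nat.le_of_dvd hpos hdvd)
  obtain ⟨⟨x, hxsol⟩, hxne⟩ := Fintype.exists_ne_of_one_lt_card hge ⟨0, h0sol⟩
  have hx0 : x ≠ 0 := fun h => hxne (Subtype.ext h)
  set A : Finset (Fin m) := Finset.univ.filter (fun i => x i ≠ 0) with hA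
  have hAne : A.Nonempty := by
    rcases Finset.eq_empty_or_nonempty A with h | h
    · exfalso; apply hx0; funext i
      show x i = 0
      by_contra hxi
      exact Finset.notMem_empty i (h ▸ (by simp [hA, hxi]))
    · exact h
  have hsum : ∑ i ∈ A, g i = 0 := by
    funext j
    have h1 : MvPolynomial.eval x (f j) = ∑ i : Fin m, g i j * x i ^ (p-1) := by
      simp [hf]
    have h2 : ∑ i ∈ A, g i j * x i ^ (p-1) = ∑ i : Fin m, g i j * x i ^ (p-1) :=
      Finset.sum_subset (Finset.subset_univ A) (by
        intro i _ hiA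
        have : x i = 0 := by
          by_contra hxi
          exact hiA (by simp [hA, hxi])
        rw [this, zero_pow (Nat.sub_ne_zero_of_lt hp.one_lt), mul_zero])
    have h3 : ∑ i ∈ A, g i j * x i ^ (p-1) = ∑ i ∈ A, g i j := by
      refine Finset.sum_congr rfl fun i hi => ?_
      have hxi : x i ≠ 0 := by simpa [hA] using hi
      rw [ZMod.pow_card_sub_one_eq_one hxi, mul_one]
    rw [Finset.sum_apply]
    rw [h3.symm.trans (h2.trans (h1.symm.trans (hxsol j)))]
    rfl
  refine ⟨A.val.map l.get, ?_, ?_, ?_⟩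
  · calc A.val.map l.get ≤ (Finset.univ : Finset (Fin m)).val.map l.get :=
        Multiset.map_le_map (by exact Finset.val_le_iff.mpr (Finset.subset_univ A))
      _ = T := by
        rw [Fin.univ_def]
        show Multiset.map l.get (↑(List.finRange m)) = T
        rw [Multiset.map_coe, List.map_get_finRange, hl]
  · simp only [ne_eq, Multiset.map_eq_zero]
    exact fun h => hAne.ne_empty (Finset.val_eq_zero.mp h)
  · rw [Multiset.map_map]
    exact hsum

lemma case_bound {G : Type*} [AddCommGroup G] (p r : ℕ) (hp : p.Prime)
    (S : Multiset G) (hSne : S ≠ 0)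
    (hmin : ∀ T : Multiset G, T < S → T ≠ 0 → T.sum ≠ (0 : G))
    (φ : G → (Fin r → ZMod p))
    (hφ : ∀ U : Multiset G, U ≤ S → (U.map φ).sum = 0 → U.sum = 0)
    (hcard : r * (p - 1) + 2 ≤ Multiset.card S) : False := by
  classical
  obtain ⟨g₀, hg₀⟩ := Multiset.exists_mem_of_ne_zero hSne
  obtain ⟨U, hUT, hUne, hUsum⟩ := davenport p r hp φ (S.erase g₀) (by
    rw [Multiset.card_erase_of_mem hg₀, Nat.pred_eq_sub_one]; omega)
  have hUS : U < S := lt_of_le_of_lt hUT (Multiset.erase_lt.mpr hg₀)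
  exact hmin U hUS hUne (hφ U hUS.le hUsum)

lemma order_cases {p q r s : ℕ} (hp : p.Prime) (hq : q.Prime) (hpq : q < p)
    (g : (Fin r → ZMod p) × (Fin s → ZMod q)) (hg0 : g ≠ 0)
    (hgpq : addOrderOf g ≠ p * q) :
    (g.2 = 0 ∧ addOrderOf g = p) ∨ (g.1 = 0 ∧ addOrderOf g = q) := by
  have ha : addOrderOf g.1 ∣ p := addOrderOf_dvd_of_nsmul_eq_zero (by
    funext i; simp [nsmul_eq_mul, ZMod.natCast_self])
  have hb : addOrderOf g.2 ∣ q := addOrderOf_dvd_of_nsmul_eq_zero (by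
    funext i; simp [nsmul_eq_mul, ZMod.natCast_self])
  have hord := Prod.addOrderOf g
  rcases (hp.eq_one_or_self_of_dvd _ ha) with h1 | h1 <;>
    rcases (hq.eq_one_or_self_of_dvd _ hb) with h2 | h2
  · exact absurd (Prod.ext (AddMonoid.addOrderOf_eq_one_iff.mp h1) (AddMonoid.addOrderOf_eq_one_iff.mp h2)) hg0
  · exact Or.inr ⟨AddMonoid.addOrderOf_eq_one_iff.mp h1, by rw [hord, h1, h2, Nat.lcm_one_left]⟩
  · exact Or.inl ⟨AddMonoid.addOrderOf_eq_one_iff.mp h2, by rw [hord, h1, h2, Nat.lcm_one_right]⟩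
  · exact absurd (by
      rw [hord, h1, h2]
      exact Nat.Coprime.lcm_eq_mul ((Nat.coprime_primes hp hq).mpr (by omega))) hgpq

theorem stmt15 (p q r s : ℕ) (hp : p.Prime) (hq : q.Prime) (hpq : q < p)
    (hr : 1 ≤ r) (hs : 1 ≤ s)
    (S : Multiset ((Fin r → ZMod p) × (Fin s → ZMod q)))
    (hS : IsMinZeroSum S)
    (hk : crossNum S >
      max (((1 : ℚ) + r * (p - 1)) / p) (((1 : ℚ) + s * (q - 1)) / q)) :
    ∃ g ∈ S, addOrderOf g = p * q := by
  classical
  by_contra hcon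
  push_neg at hcon
  obtain ⟨hSne, hSsum, hSmin⟩ := hS
  have hp1 : 1 < p := hp.one_lt
  have hq1 : 1 < q := hq.one_lt
  have hp0 : (0 : ℚ) < (p : ℚ) := by exact_mod_cast hp.pos
  have hq0 : (0 : ℚ) < (q : ℚ) := by exact_mod_cast hq.pos
  -- 0 is not in S
  have h0S : (0 : (Fin r → ZMod p) × (Fin s → ZMod q)) ∉ S := by
    intro h0
    have hle : ({0} : Multiset ((Fin r → ZMod p) × (Fin s → ZMod q))) ≤ S :=
      Multiset.singleton_le.mpr h0
    have hSeq : S = {0} := by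
      by_contra hne
      exact hSmin {0} (lt_of_le_of_ne hle (Ne.symm hne)) (by simp) (by simp)
    have hc : crossNum S = 1 := by
      rw [hSeq]; simp [crossNum]
    have hmax : (1 : ℚ) ≤ ((1 : ℚ) + r * ((p : ℚ) - 1)) / p := by
      rw [le_div_iff₀ hp0]
      have hr' : (1 : ℚ) ≤ (r : ℚ) := by exact_mod_cast hr
      have hp2 : (2 : ℚ) ≤ (p : ℚ) := by exact_mod_cast hp.two_le
      nlinarith
    have := lt_of_le_of_lt (le_trans hmax (le_max_left _ _)) hk
    rw [hc] at this
    exact lt_irrefl _ this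
  have key : ∀ g ∈ S, (g.2 = 0 ∧ addOrderOf g = p) ∨ (g.1 = 0 ∧ addOrderOf g = q) :=
    fun g hg => order_cases hp hq hpq g (fun h => h0S (h ▸ hg)) (hcon g hg)
  set S₁ := S.filter (fun g => g.2 = 0) with hS₁
  set S₂ := S.filter (fun g => ¬ g.2 = 0) with hS₂
  have hsplit : S₁ + S₂ = S := Multiset.filter_add_not _ S
  -- sums of the two parts
  have hsnd1 : (S₁.sum).2 = 0 := by
    have h : (S₁.sum).2 = (S₁.map Prod.snd).sum := by
      simpa using map_multiset_sum (AddMonoidHom.snd (Fin r → ZMod p) (Fin s → ZMod q)) S₁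
    rw [h]
    exact Multiset.sum_eq_zero (fun x hx => by
      obtain ⟨g, hg, rfl⟩ := Multiset.mem_map.mp hx
      exact (Multiset.mem_filter.mp hg).2)
  have hfst2 : (S₂.sum).1 = 0 := by
    have h : (S₂.sum).1 = (S₂.map Prod.fst).sum := by
      simpa using map_multiset_sum (AddMonoidHom.fst (Fin r → ZMod p) (Fin s → ZMod q)) S₂
    rw [h]
    exact Multiset.sum_eq_zero (fun x hx => by
      obtain ⟨g, hg, rfl⟩ := Multiset.mem_map.mp hx
      have hgS := Multiset.mem_of_le (Multiset.filter_le _ S) hg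
      have hg2 := (Multiset.mem_filter.mp hg).2
      rcases key g hgS with ⟨h, _⟩ | ⟨h, _⟩
      · exact absurd h hg2
      · exact h)
  have hadd : S₁.sum + S₂.sum = 0 := by
    rw [← Multiset.sum_add, hsplit, hSsum]
  have hsum1 : S₁.sum = 0 := by
    refine Prod.ext ?_ hsnd1
    have : (S₁.sum).1 + (S₂.sum).1 = 0 := by
      rw [← Prod.fst_add, hadd]; rfl
    rw [hfst2, add_zero] at this
    exact this
  have hsum2 : S₂.sum = 0 := by
    have := eq_neg_of_add_eq_zero_right hadd
    rw [this, hsum1, neg_zero]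
  -- one of the two parts is empty
  have hcases : S₂ = 0 ∨ S₁ = 0 := by
    by_contra hboth
    push_neg at hboth
    obtain ⟨h2ne, h1ne⟩ := hboth
    have hlt : S₁ < S := lt_of_le_of_ne (Multiset.filter_le _ S) (by
      intro h
      rw [h] at hsplit
      exact h2ne ((add_eq_left).mp hsplit))
    exact hSmin S₁ hlt h1ne hsum1
  rcases hcases with h2 | h1
  · -- all elements have second component zero, order p
    have hSS₁ : S₁ = S := by rw [← hsplit, h2, add_zero]
    have hAll : ∀ g ∈ S, g.2 = 0 ∧ addOrderOf g = p := by
      intro g hg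
      have hg2 : g.2 = 0 := (Multiset.mem_filter.mp (hSS₁ ▸ hg : g ∈ S₁)).2
      rcases key g hg with h | ⟨h1', h2'⟩
      · exact h
      · have hgeq : g = 0 := Prod.ext h1' hg2
        exact absurd (hgeq ▸ hg) h0S
    have hcross : crossNum S = (Multiset.card S : ℚ) * ((1:ℚ) / p) := by
      show (S.map (fun g => (1 : ℚ) / (addOrderOf g : ℚ))).sum = _
      rw [Multiset.map_congr rfl (fun g hg => by rw [(hAll g hg).2])]
      rw [Multiset.map_const', Multiset.sum_replicate, nsmul_eq_mul]
    have hkp : (((1:ℚ) + r * ((p:ℚ) - 1)) / p) < (Multiset.card S : ℚ) * ((1:ℚ)/p) :=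
      hcross ▸ lt_of_le_of_lt (le_max_left _ _) hk
    have hcardQ : (1:ℚ) + (r:ℚ) * ((p:ℚ)-1) < (Multiset.card S : ℚ) := by
      rw [mul_one_div, div_lt_div_iff₀ hp0 hp0] at hkp
      nlinarith
    have hcardN : r * (p-1) + 2 ≤ Multiset.card S := by
      have h : ((r * (p-1) + 1 : ℕ) : ℚ) < ((Multiset.card S : ℕ) : ℚ) := by
        rw [Nat.cast_add, Nat.cast_mul, Nat.cast_sub hp1.le, Nat.cast_one]
        linarith
      have := Nat.cast_lt (α := ℚ) |>.mp h
      omega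
    refine case_bound p r hp S hSne hSmin Prod.fst ?_ hcardN
    intro U hUS hU0
    have h1 : (U.sum).1 = 0 := by
      have h : (U.sum).1 = (U.map Prod.fst).sum := by
        simpa using map_multiset_sum (AddMonoidHom.fst (Fin r → ZMod p) (Fin s → ZMod q)) U
      rw [h, hU0]
    have h2u : (U.sum).2 = 0 := by
      have h : (U.sum).2 = (U.map Prod.snd).sum := by
        simpa using map_multiset_sum (AddMonoidHom.snd (Fin r → ZMod p) (Fin s → ZMod q)) U
      rw [h]
      exact Multiset.sum_eq_zero (fun x hx => by
        obtain ⟨g, hg, rfl⟩ := Multiset.mem_map.mp hx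
        exact (hAll g (Multiset.mem_of_le hUS hg)).1)
    exact Prod.ext h1 h2u
  · -- all elements have first component zero, order q
    have hSS₂ : S₂ = S := by rw [← hsplit, h1, zero_add]
    have hAll : ∀ g ∈ S, g.1 = 0 ∧ addOrderOf g = q := by
      intro g hg
      have hg2 : ¬ g.2 = 0 := (Multiset.mem_filter.mp (hSS₂ ▸ hg : g ∈ S₂)).2
      rcases key g hg with ⟨h', _⟩ | h
      · exact absurd h' hg2
      · exact h
    have hcross : crossNum S = (Multiset.card S : ℚ) * ((1:ℚ) / q) := by
      show (S.map (fun g => (1 : ℚ) / (addOrderOf g : ℚ))).sum = _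
      rw [Multiset.map_congr rfl (fun g hg => by rw [(hAll g hg).2])]
      rw [Multiset.map_const', Multiset.sum_replicate, nsmul_eq_mul]
    have hkp : (((1:ℚ) + s * ((q:ℚ) - 1)) / q) < (Multiset.card S : ℚ) * ((1:ℚ)/q) :=
      hcross ▸ lt_of_le_of_lt (le_max_right _ _) hk
    have hcardQ : (1:ℚ) + (s:ℚ) * ((q:ℚ)-1) < (Multiset.card S : ℚ) := by
      rw [mul_one_div, div_lt_div_iff₀ hq0 hq0] at hkp
      nlinarith
    have hcardN : s * (q-1) + 2 ≤ Multiset.card S := by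
      have h : ((s * (q-1) + 1 : ℕ) : ℚ) < ((Multiset.card S : ℕ) : ℚ) := by
        rw [Nat.cast_add, Nat.cast_mul, Nat.cast_sub hq1.le, Nat.cast_one]
        linarith
      have := Nat.cast_lt (α := ℚ) |>.mp h
      omega
    refine case_bound q s hq S hSne hSmin Prod.snd ?_ hcardN
    intro U hUS hU0
    have h2u : (U.sum).2 = 0 := by
      have h : (U.sum).2 = (U.map Prod.snd).sum := by
        simpa using map_multiset_sum (AddMonoidHom.snd (Fin r → ZMod p) (Fin s → ZMod q)) U
      rw [h, hU0]
    have h1u : (U.sum).1 = 0 := by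
      have h : (U.sum).1 = (U.map Prod.fst).sum := by
        simpa using map_multiset_sum (AddMonoidHom.fst (Fin r → ZMod p) (Fin s → ZMod q)) U
      rw [h]
      exact Multiset.sum_eq_zero (fun x hx => by
        obtain ⟨g, hg, rfl⟩ := Multiset.mem_map.mp hx
        exact (hAll g (Multiset.mem_of_le hUS hg)).1)
    exact Prod.ext h1u h2u
end

section
/- Let G = C_p^r ⊕ C_q^s with r, s ≥ 1 and p > q primes. If S is a sequence over G all of whose elements have order p or pq (i.e. no element lies in the subgroup C_q^s) and k(S) ≥ r(p−1)/p + η(C_q^s)/(pq), then S is not zero-sum free. -/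
open Multiset Pointwise

/-- Lifting submultisets along `map`. -/
lemma my_exists_le_map {α β : Type*} {f : α → β} :
    ∀ (T : Multiset β) (M : Multiset α), T ≤ M.map f → ∃ E, E ≤ M ∧ E.map f = T := by
  classical
  intro T
  induction T using Multiset.induction with
  | empty => exact fun M _ => ⟨0, Multiset.zero_le M, rfl⟩
  | cons b T ih =>
    intro M hT
    have hb : b ∈ M.map f := Multiset.mem_of_le hT (Multiset.mem_cons_self b T)
    obtain ⟨a, haM, rfl⟩ := Multiset.mem_map.mp hb
    have hM : M = a ::ₘ M.erase a := (Multiset.cons_erase haM).symm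
    rw [hM, Multiset.map_cons] at hT
    have hT' : T ≤ (M.erase a).map f := (Multiset.cons_le_cons_iff _).mp hT
    obtain ⟨E, hE, hEf⟩ := ih (M.erase a) hT'
    exact ⟨a ::ₘ E, by rw [hM]; exact Multiset.cons_le_cons _ hE,
      by rw [Multiset.map_cons, hEf]⟩

/-- Davenport constant bound for `(ZMod p)^r` via Chevalley–Warning. -/
lemma my_davenport {p r : ℕ} (hp : p.Prime) (M : Multiset (Fin r → ZMod p))
    (hcard : r * (p - 1) < Multiset.card M) :
    ∃ U, U ≤ M ∧ U ≠ 0 ∧ U.sum = 0 := by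
  classical
  haveI : Fact p.Prime := ⟨hp⟩
  set l := M.toList with hl
  have hlM : (l : Multiset _) = M := Multiset.coe_toList M
  have hcard' : r * (p - 1) < l.length := by rwa [← hlM, Multiset.coe_card] at hcard
  set g : Fin l.length → (Fin r → ZMod p) := l.get with hg
  set f : Fin r → MvPolynomial (Fin l.length) (ZMod p) :=
    fun j => ∑ i, MvPolynomial.C (g i j) * (MvPolynomial.X i) ^ (p - 1) with hf
  have hdeg : ∀ j, (f j).totalDegree ≤ p - 1 := by
    intro j
    refine (MvPolynomial.totalDegree_finset_sum _ _).trans ?_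
    apply Finset.sup_le
    intro i _
    calc (MvPolynomial.C (g i j) * MvPolynomial.X i ^ (p - 1)).totalDegree
        ≤ (MvPolynomial.C (g i j) : MvPolynomial (Fin l.length) (ZMod p)).totalDegree
          + ((MvPolynomial.X i : MvPolynomial (Fin l.length) (ZMod p)) ^ (p - 1)).totalDegree :=
        MvPolynomial.totalDegree_mul _ _
      _ ≤ p - 1 := by
        simp [MvPolynomial.totalDegree_C, MvPolynomial.totalDegree_X_pow]
  have hsum : (∑ j : Fin r, (f j).totalDegree) < Fintype.card (Fin l.length) := by
    calc ∑ j : Fin r, (f j).totalDegree ≤ ∑ _j : Fin r, (p - 1) :=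
        Finset.sum_le_sum fun j _ => hdeg j
      _ = r * (p - 1) := by simp [mul_comm]
      _ < Fintype.card (Fin l.length) := by simpa using hcard'
  have hdvd := char_dvd_card_solutions_of_fintype_sum_lt (K := ZMod p) p hsum
  have hdvd' : p ∣ Fintype.card { x : Fin l.length → ZMod p //
      ∀ j, MvPolynomial.eval x (f j) = 0 } := by
    convert hdvd using 2
  have hp1 : 0 < p - 1 := by have := hp.two_le; omega
  have hx0 : ∀ j, MvPolynomial.eval (0 : Fin l.length → ZMod p) (f j) = 0 := by
    intro j
    simp [hf, hp1.ne']
  have hpos : 0 < Fintype.card { x : Fin l.length → ZMod p //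
      ∀ j, MvPolynomial.eval x (f j) = 0 } :=
    Fintype.card_pos_iff.mpr ⟨⟨0, hx0⟩⟩
  have h1lt : 1 < Fintype.card { x : Fin l.length → ZMod p //
      ∀ j, MvPolynomial.eval x (f j) = 0 } :=
    lt_of_lt_of_le hp.one_lt (Nat.le_of_dvd hpos hdvd')
  obtain ⟨x, hxne⟩ := Fintype.exists_ne_of_one_lt_card h1lt ⟨0, hx0⟩
  have hxval : x.val ≠ 0 := fun h => hxne (Subtype.ext h)
  set I : Finset (Fin l.length) := Finset.univ.filter fun i => x.val i ≠ 0 with hI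
  have hIne : I.Nonempty := by
    rcases Function.ne_iff.mp hxval with ⟨i, hi⟩
    refine ⟨i, ?_⟩
    simp only [hI, Finset.mem_filter, Finset.mem_univ, true_and]
    simpa using hi
  have hsum0 : ∀ j, ∑ i ∈ I, g i j = 0 := by
    intro j
    have h0 : (MvPolynomial.eval (x.val : Fin l.length → ZMod p))
        (∑ i, MvPolynomial.C (g i j) * MvPolynomial.X i ^ (p - 1)) = 0 := x.prop j
    simp only [map_sum, map_mul, map_pow, MvPolynomial.eval_C, MvPolynomial.eval_X] at h0
    have hsplit := Finset.sum_filter_add_sum_filter_not Finset.univ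
      (fun i => x.val i ≠ 0) (fun i => g i j * (x.val i) ^ (p - 1))
    have h2 : ∑ i ∈ Finset.univ.filter (fun i => ¬ x.val i ≠ 0),
        g i j * (x.val i) ^ (p - 1) = 0 := by
      refine Finset.sum_eq_zero fun i hi => ?_
      have : x.val i = 0 := by simpa using (Finset.mem_filter.mp hi).2
      simp [this, hp1.ne']
    have h1 : ∑ i ∈ I, g i j * (x.val i) ^ (p - 1) = ∑ i ∈ I, g i j := by
      refine Finset.sum_congr rfl fun i hi => ?_
      have : x.val i ≠ 0 := by simpa [hI] using (Finset.mem_filter.mp hi).2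
      rw [ZMod.pow_card_sub_one_eq_one this, mul_one]
    calc ∑ i ∈ I, g i j = ∑ i ∈ I, g i j * (x.val i) ^ (p - 1) + 0 := by rw [h1, add_zero]
      _ = ∑ i ∈ I, g i j * (x.val i) ^ (p - 1)
          + ∑ i ∈ Finset.univ.filter (fun i => ¬ x.val i ≠ 0),
            g i j * (x.val i) ^ (p - 1) := by rw [h2]
      _ = ∑ i, g i j * (x.val i) ^ (p - 1) := hsplit
      _ = 0 := h0
  have hmapuniv : Multiset.map g (Finset.univ : Finset (Fin l.length)).val = M := by
    rw [Fin.univ_def]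
    show Multiset.map l.get ↑(List.finRange l.length) = M
    rw [Multiset.map_coe, List.map_get_finRange, hlM]
  refine ⟨Multiset.map g I.val, ?_, ?_, ?_⟩
  · rw [← hmapuniv]
    exact Multiset.map_le_map (Finset.val_le_iff.mpr (Finset.subset_univ I))
  · simp only [ne_eq, Multiset.map_eq_zero]
    exact fun h => hIne.ne_empty (Finset.val_eq_zero.mp h)
  · funext j
    have : (Multiset.map g I.val).sum = ∑ i ∈ I, g i := rfl
    rw [this, Finset.sum_apply]
    exact hsum0 j

section Helpers

lemma my_le_join {α : Type*} {W : Multiset α} {C : Multiset (Multiset α)} (h : W ∈ C) :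
    W ≤ C.join := by
  obtain ⟨C', rfl⟩ := Multiset.exists_cons_of_mem h
  rw [Multiset.join_cons]
  exact Multiset.le_iff_exists_add.mpr ⟨C'.join, rfl⟩

lemma my_join_le {α : Type*} {E D : Multiset (Multiset α)} (h : E ≤ D) : E.join ≤ D.join := by
  obtain ⟨F, rfl⟩ := Multiset.le_iff_exists_add.mp h
  rw [Multiset.join_add]
  exact Multiset.le_iff_exists_add.mpr ⟨F.join, rfl⟩

lemma my_fst_sum {α β : Type*} [AddCommMonoid α] [AddCommMonoid β] (W : Multiset (α × β)) :
    (W.sum).1 = (W.map Prod.fst).sum := by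
  simpa using map_multiset_sum (AddMonoidHom.fst α β) W

lemma my_snd_sum {α β : Type*} [AddCommMonoid α] [AddCommMonoid β] (W : Multiset (α × β)) :
    (W.sum).2 = (W.map Prod.snd).sum := by
  simpa using map_multiset_sum (AddMonoidHom.snd α β) W

/-- Greedy extraction of disjoint blocks with vanishing second-coordinate sums. -/
lemma my_extract {α β : Type*} [AddCommMonoid β] (q η : ℕ)
    (hη : ∀ T : Multiset β, η ≤ Multiset.card T →
      ∃ U, U ≤ T ∧ U ≠ 0 ∧ Multiset.card U ≤ q ∧ U.sum = 0)
    (B : Multiset (α × β)) :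
    ∃ (C : Multiset (Multiset (α × β))) (B' : Multiset (α × β)),
      C.join + B' = B ∧ Multiset.card B' < η ∧
      ∀ V ∈ C, V ≠ 0 ∧ Multiset.card V ≤ q ∧ (V.map Prod.snd).sum = 0 := by
  classical
  induction B using Multiset.strongInductionOn with
  | _ B ih =>
    by_cases hB : Multiset.card B < η
    · exact ⟨0, B, by simp, hB, by simp⟩
    · push_neg at hB
      obtain ⟨U, hU, hUne, hUcard, hUsum⟩ := hη (B.map Prod.snd)
        (by rwa [Multiset.card_map])
      obtain ⟨V, hVB, hVmap⟩ := my_exists_le_map U B hU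
      have hVne : V ≠ 0 := by
        rintro rfl
        rw [Multiset.map_zero] at hVmap
        exact hUne hVmap.symm
      have hVcard : Multiset.card V ≤ q := by
        rw [← hVmap, Multiset.card_map] at hUcard
        exact hUcard
      have hlt : B - V < B := by
        refine lt_of_le_of_ne tsub_le_self fun h => ?_
        have hc : Multiset.card (B - V) = Multiset.card B - Multiset.card V :=
          Multiset.card_sub hVB
        have hVpos : 0 < Multiset.card V := Multiset.card_pos.mpr hVne
        have hVle : Multiset.card V ≤ Multiset.card B := Multiset.card_le_card hVB
        rw [h] at hc
        omega
      obtain ⟨C, B', hjoin, hB'card, hCprop⟩ := ih (B - V) hlt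
      refine ⟨V ::ₘ C, B', ?_, hB'card, ?_⟩
      · rw [Multiset.join_cons, add_assoc, hjoin, add_tsub_cancel_of_le hVB]
      · intro W hW
        rcases Multiset.mem_cons.mp hW with rfl | hW
        · exact ⟨hVne, hVcard, by rw [hVmap]; exact hUsum⟩
        · exact hCprop W hW

end Helpers

theorem stmt16 (p q r s : ℕ) (hp : p.Prime) (hq : q.Prime) (hpq : q < p)
    (hr : 1 ≤ r) (hs : 1 ≤ s)
    (η : ℕ)
    (hη : IsLeast { t : ℕ | ∀ T : Multiset (Fin s → ZMod q), t ≤ Multiset.card T →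
      ∃ U : Multiset (Fin s → ZMod q), U ≤ T ∧ U ≠ 0 ∧
        Multiset.card U ≤ AddMonoid.exponent (Fin s → ZMod q) ∧ U.sum = 0 } η)
    (S : Multiset ((Fin r → ZMod p) × (Fin s → ZMod q)))
    (hord : ∀ g ∈ S, addOrderOf g = p ∨ addOrderOf g = p * q)
    (hk : crossNum S ≥ (r : ℚ) * (p - 1) / p + (η : ℚ) / (p * q)) :
    ¬ IsZeroSumFree S := by
  intro hZSF
  classical
  haveI : Fact p.Prime := ⟨hp⟩
  haveI : Fact q.Prime := ⟨hq⟩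
  -- η ≥ 1
  have hη1 : 1 ≤ η := by
    rcases Nat.eq_zero_or_pos η with h0 | h
    · obtain ⟨U, hU, hUne, -, -⟩ := hη.1 (0 : Multiset (Fin s → ZMod q)) (by simp [h0])
      exact absurd (Multiset.le_zero.mp hU) hUne
    · exact h
  -- exponent bound
  have hexp : AddMonoid.exponent (Fin s → ZMod q) ≤ q := by
    have hdvd : AddMonoid.exponent (Fin s → ZMod q) ∣ q :=
      AddMonoid.exponent_dvd_of_forall_nsmul_eq_zero fun x => by
        funext i
        simp [nsmul_eq_mul, ZMod.natCast_self]
    exact Nat.le_of_dvd hq.pos hdvd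
  have hη' : ∀ T : Multiset (Fin s → ZMod q), η ≤ Multiset.card T →
      ∃ U, U ≤ T ∧ U ≠ 0 ∧ Multiset.card U ≤ q ∧ U.sum = 0 := by
    intro T hT
    obtain ⟨U, h1, h2, h3, h4⟩ := hη.1 T hT
    exact ⟨U, h1, h2, h3.trans hexp, h4⟩
  -- splitting S by order
  set A := S.filter (fun g => addOrderOf g = p) with hA
  set B := S.filter (fun g => ¬ addOrderOf g = p) with hB
  have hAB : A + B = S := Multiset.filter_add_not _ S
  have hAmem : ∀ g ∈ A, addOrderOf g = p := fun g hg => (Multiset.mem_filter.mp hg).2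
  have hBmem : ∀ g ∈ B, addOrderOf g = p * q := by
    intro g hg
    have h1 := (Multiset.mem_filter.mp hg).2
    have h2 := hord g (Multiset.mem_of_le (Multiset.filter_le _ S) hg)
    tauto
  -- elements of order p have vanishing second coordinate
  have hAsnd : ∀ g ∈ A, (g : (Fin r → ZMod p) × (Fin s → ZMod q)).2 = 0 := by
    intro g hg
    have hp' : p • g = 0 := by
      have h := addOrderOf_nsmul_eq_zero g
      rwa [hAmem g hg] at h
    have hp2 : p • g.2 = 0 := by
      have := congrArg Prod.snd hp'
      simpa using this
    have hq2 : q • g.2 = 0 := by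
      funext i
      simp [nsmul_eq_mul, ZMod.natCast_self]
    have hd : addOrderOf g.2 ∣ Nat.gcd p q :=
      Nat.dvd_gcd (addOrderOf_dvd_of_nsmul_eq_zero hp2) (addOrderOf_dvd_of_nsmul_eq_zero hq2)
    have hcop : Nat.gcd p q = 1 := (Nat.coprime_primes hp hq).mpr (ne_of_gt hpq)
    rw [hcop, Nat.dvd_one] at hd
    exact AddMonoid.addOrderOf_eq_one_iff.mp hd
  -- extraction of blocks from B
  obtain ⟨C, B', hjoin, hB'card, hC⟩ := my_extract q η hη' B
  -- the full block system
  set D : Multiset (Multiset ((Fin r → ZMod p) × (Fin s → ZMod q))) :=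
    A.map (fun a => {a}) + C with hD
  have hDjoin : D.join = A + C.join := by
    rw [hD, Multiset.join_add]
    congr 1
    have h1 : (A.map fun a => ({a} : Multiset _)).join = A.bind (fun a => {id a}) := rfl
    rw [h1, Multiset.bind_singleton, Multiset.map_id]
  have hCle : C.join ≤ B := Multiset.le_iff_exists_add.mpr ⟨B', hjoin.symm⟩
  have hDle : D.join ≤ S := by
    rw [hDjoin, ← hAB]
    exact add_le_add_right hCle A
  -- block properties
  have hblk : ∀ W ∈ D, W ≠ 0 ∧ Multiset.card W ≤ q ∧ (W.map Prod.snd).sum = 0 := by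
    intro W hW
    rcases Multiset.mem_add.mp hW with hW | hW
    · obtain ⟨a, ha, rfl⟩ := Multiset.mem_map.mp hW
      exact ⟨by simp, by simpa using hq.one_lt.le, by simp [hAsnd a ha]⟩
    · exact hC W hW
  have hWle : ∀ W ∈ D, W ≤ S := fun W hW => le_trans (my_le_join hW) hDle
  -- Davenport bound on the number of blocks
  have hcardD : Multiset.card D ≤ r * (p - 1) := by
    by_contra hcontra
    push_neg at hcontra
    obtain ⟨U, hU, hUne, hUsum⟩ := my_davenport hp (D.map (fun W => (W.sum).1))
      (by rwa [Multiset.card_map])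
    obtain ⟨E, hED, hEmap⟩ := my_exists_le_map U D hU
    have hTle : E.join ≤ S := le_trans (my_join_le hED) hDle
    have hEne : E ≠ 0 := by
      rintro rfl
      rw [Multiset.map_zero] at hEmap
      exact hUne hEmap.symm
    have hTne : E.join ≠ 0 := by
      obtain ⟨W, hWE⟩ := Multiset.exists_mem_of_ne_zero hEne
      have hWne := (hblk W (Multiset.mem_of_le hED hWE)).1
      intro h0
      exact hWne (Multiset.le_zero.mp (h0 ▸ my_le_join hWE))
    have hT1 : (E.join.sum).1 = 0 := by
      calc (E.join.sum).1 = ((E.map Multiset.sum).sum).1 := by rw [Multiset.sum_join]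
        _ = ((E.map Multiset.sum).map Prod.fst).sum := my_fst_sum _
        _ = (E.map fun W => (W.sum).1).sum := by rw [Multiset.map_map]; rfl
        _ = U.sum := by rw [hEmap]
        _ = 0 := hUsum
    have hT2 : (E.join.sum).2 = 0 := by
      calc (E.join.sum).2 = ((E.map Multiset.sum).sum).2 := by rw [Multiset.sum_join]
        _ = ((E.map Multiset.sum).map Prod.snd).sum := my_snd_sum _
        _ = (E.map fun W => (W.sum).2).sum := by rw [Multiset.map_map]; rfl
        _ = (E.map fun _ => (0 : Fin s → ZMod q)).sum := by
            congr 1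
            refine Multiset.map_congr rfl fun W hW => ?_
            rw [my_snd_sum W]
            exact (hblk W (Multiset.mem_of_le hED hW)).2.2
        _ = 0 := by simp
    exact hZSF E.join hTle hTne (Prod.ext hT1 hT2)
  have hcards : Multiset.card A + Multiset.card C ≤ r * (p - 1) := by
    simpa [hD] using hcardD
  -- counting B
  have hcardB : Multiset.card B + 1 ≤ q * Multiset.card C + η := by
    have h1 : Multiset.card B = Multiset.card C.join + Multiset.card B' := by
      rw [← hjoin, Multiset.card_add]
    have h2 : Multiset.card C.join ≤ q * Multiset.card C := by
      rw [Multiset.card_join]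
      calc (C.map Multiset.card).sum ≤ (C.map fun _ => q).sum :=
          Multiset.sum_map_le_sum_map _ _ (fun V hV => (hC V hV).2.1)
        _ = q * Multiset.card C := by
          rw [Multiset.map_const', Multiset.sum_replicate, smul_eq_mul, mul_comm]
    omega
  -- cross number computation
  have hp0 : (p : ℚ) ≠ 0 := Nat.cast_ne_zero.mpr hp.pos.ne'
  have hq0 : (q : ℚ) ≠ 0 := Nat.cast_ne_zero.mpr hq.pos.ne'
  have hcross : crossNum S =
      ((q * Multiset.card A + Multiset.card B : ℕ) : ℚ) / (p * q) := by
    rw [← hAB]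
    unfold crossNum
    rw [Multiset.map_add, Multiset.sum_add]
    have e1 : (A.map fun g => (1 : ℚ) / (addOrderOf g : ℚ)) =
        A.map (fun _ => (1 : ℚ) / (p : ℚ)) :=
      Multiset.map_congr rfl (fun g hg => by rw [hAmem g hg])
    have e2 : (B.map fun g => (1 : ℚ) / (addOrderOf g : ℚ)) =
        B.map (fun _ => (1 : ℚ) / ((p : ℚ) * (q : ℚ))) :=
      Multiset.map_congr rfl (fun g hg => by rw [hBmem g hg]; push_cast; ring_nf)
    rw [e1, e2, Multiset.map_const', Multiset.map_const',
      Multiset.sum_replicate, Multiset.sum_replicate]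
    push_cast
    field_simp
    rw [nsmul_eq_mul, nsmul_eq_mul]
    have h1 : (p:ℚ) * (1 / p) = 1 := by rw [mul_one_div_cancel hp0]
    have h2 : (q:ℚ) * p * (1 / (q * p)) = 1 := by rw [mul_one_div_cancel (mul_ne_zero hq0 hp0)]
    linear_combination ((q:ℚ) * (Multiset.card A : ℚ)) * h1 + (Multiset.card B : ℚ) * h2
  -- turn the rational inequality into a natural one
  have hkey : q * (r * (p - 1)) + η ≤ q * Multiset.card A + Multiset.card B := by
    have hpq0 : (0 : ℚ) < (p : ℚ) * (q : ℚ) := by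
      have := hp.pos
      have := hq.pos
      positivity
    rw [hcross] at hk
    have hrhs : (r : ℚ) * ((p : ℚ) - 1) / (p : ℚ) + (η : ℚ) / ((p : ℚ) * (q : ℚ)) =
        ((q * (r * (p - 1)) + η : ℕ) : ℚ) / ((p : ℚ) * (q : ℚ)) := by
      push_cast [Nat.cast_sub hp.one_le]
      field_simp
    rw [ge_iff_le, hrhs] at hk
    exact_mod_cast (div_le_div_iff_of_pos_right hpq0).mp hk
  -- final contradiction
  have hfinal : q * (r * (p - 1)) + η + 1 ≤ q * (r * (p - 1)) + η := by
    calc q * (r * (p - 1)) + η + 1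
        ≤ q * Multiset.card A + Multiset.card B + 1 := Nat.add_le_add_right hkey 1
      _ ≤ q * Multiset.card A + (q * Multiset.card C + η) := by omega
      _ = q * (Multiset.card A + Multiset.card C) + η := by ring
      _ ≤ q * (r * (p - 1)) + η :=
          Nat.add_le_add_right (Nat.mul_le_mul_left q hcards) η
  exact Nat.not_succ_le_self _ hfinal
end

section
/- Let G = C_p^r ⊕ C_q^s with r, s ≥ 1 and p > q primes. Then W(G) ⊆ 1/(pq) + w(G), i.e. every cross number of a minimal zero-sum sequence over G equals 1/(pq) plus a cross number of a non-trivial zero-sum free sequence over G. -/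
open Multiset Pointwise

lemma crossNum_cons {G : Type*} [AddCommGroup G] (g : G) (S : Multiset G) :
    crossNum (g ::ₘ S) = 1 / (addOrderOf g : ℚ) + crossNum S := by
  simp [crossNum]

lemma crossNum_add {G : Type*} [AddCommGroup G] (S T : Multiset G) :
    crossNum (S + T) = crossNum S + crossNum T := by
  simp [crossNum]

lemma crossNum_replicate {G : Type*} [AddCommGroup G] (n : ℕ) (g : G) :
    crossNum (replicate n g) = (n : ℚ) / (addOrderOf g : ℚ) := by
  simp [crossNum, Multiset.map_replicate, Multiset.sum_replicate, nsmul_eq_mul]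
  ring

/-- Key construction: from a minimal zero-sum sequence `S`, remove `g ∈ S` and add
`n-1` copies of an element `h` whose image under a hom `φ` killing `S` has order `n`.
The result is a non-trivial zero-sum free sequence. -/
lemma zsf_aux {G B : Type*} [AddCommGroup G] [AddCommGroup B] [DecidableEq G]
    (S : Multiset G) (hS : IsMinZeroSum S) (g : G) (hg : g ∈ S)
    (φ : G →+ B) (hφS : ∀ x ∈ S, φ x = 0)
    (h : G) (n : ℕ) (hn : 2 ≤ n) (hφh : addOrderOf (φ h) = n) :
    (S.erase g + replicate (n - 1) h) ≠ 0 ∧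
      IsZeroSumFree (S.erase g + replicate (n - 1) h) := by
  have hhS : h ∉ S := by
    intro hmem
    have h1 : addOrderOf (φ h) = 1 := by rw [hφS h hmem]; exact addOrderOf_zero
    omega
  have hhE : h ∉ S.erase g := fun hh => hhS (Multiset.mem_of_mem_erase hh)
  constructor
  · intro heq
    have := congrArg Multiset.card heq
    simp [Multiset.card_replicate] at this
    omega
  · intro U hU hU0 hsum0
    set j := U.count h with hj_def
    have hcount : ∀ x, U.count x ≤ (S.erase g).count x + (replicate (n-1) h).count x := by
      intro x
      have := Multiset.count_le_of_le x hU
      simpa [Multiset.count_add] using this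
    have hj : j ≤ n - 1 := by
      have := hcount h
      rw [Multiset.count_eq_zero_of_notMem hhE, Multiset.count_replicate, if_pos rfl] at this
      simpa using this
    have hU₀mem : ∀ x ∈ U, x ≠ h → x ∈ S := by
      intro x hx hxh
      have hxT := Multiset.mem_of_le hU hx
      rcases Multiset.mem_add.1 hxT with h1 | h2
      · exact Multiset.mem_of_mem_erase h1
      · exact absurd (Multiset.eq_of_mem_replicate h2) hxh
    -- decompose U
    have hdec : U.filter (· = h) + U.filter (fun x => ¬ x = h) = U :=
      Multiset.filter_add_not _ U
    have hfe : U.filter (· = h) = replicate j h := Multiset.filter_eq' U h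
    have hφ0 : φ ((U.filter (fun x => ¬ x = h)).sum) = 0 := by
      rw [map_multiset_sum]
      apply Multiset.sum_eq_zero
      intro x hx
      rcases Multiset.mem_map.1 hx with ⟨y, hy, rfl⟩
      have hy' := Multiset.mem_filter.1 hy
      exact hφS y (hU₀mem y hy'.1 hy'.2)
    have hsmul : j • φ h = 0 := by
      have : φ U.sum = 0 := by rw [hsum0]; exact map_zero φ
      rw [← hdec, Multiset.sum_add, hfe, Multiset.sum_replicate, _root_.map_add, hφ0, add_zero] at this
      simpa using this
    have hdvd : n ∣ j := by
      rw [← hφh]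
      exact addOrderOf_dvd_iff_nsmul_eq_zero.2 hsmul
    have hj0 : j = 0 := Nat.eq_zero_of_dvd_of_lt hdvd (by omega)
    have hUle : U ≤ S.erase g := by
      rw [Multiset.le_iff_count]
      intro x
      by_cases hx : x = h
      · subst hx
        rw [← hj_def, hj0]
        exact Nat.zero_le _
      · have := hcount x
        rwa [Multiset.count_replicate, if_neg (fun e => hx e.symm), add_zero] at this
    exact hS.2.2 U (lt_of_le_of_lt hUle (Multiset.erase_lt.2 hg)) hU0 hsum0

theorem stmt18 (p q r s : ℕ) (hp : p.Prime) (hq : q.Prime) (hpq : q < p)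
    (hr : 1 ≤ r) (hs : 1 ≤ s) :
    ∀ x ∈ WSet ((Fin r → ZMod p) × (Fin s → ZMod q)),
      ∃ y ∈ wSet ((Fin r → ZMod p) × (Fin s → ZMod q)),
        x = 1 / ((p : ℚ) * q) + y := by
  classical
  haveI fp : Fact p.Prime := ⟨hp⟩
  haveI fq : Fact q.Prime := ⟨hq⟩
  have hp2 := hp.two_le
  have hq2 := hq.two_le
  have hpqne : p ≠ q := by omega
  set G := (Fin r → ZMod p) × (Fin s → ZMod q) with hG
  -- constant elements of order p and q
  set a₀ : Fin r → ZMod p := fun _ => 1 with ha₀def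
  set b₀ : Fin s → ZMod q := fun _ => 1 with hb₀def
  have ha₀ : addOrderOf a₀ = p := by
    apply addOrderOf_eq_prime
    · funext i
      show p • (1 : ZMod p) = 0
      rw [nsmul_eq_mul, mul_one, ZMod.natCast_self]
    · intro hcon
      have := congrFun hcon ⟨0, hr⟩
      exact one_ne_zero this
  have hb₀ : addOrderOf b₀ = q := by
    apply addOrderOf_eq_prime
    · funext i
      show q • (1 : ZMod q) = 0
      rw [nsmul_eq_mul, mul_one, ZMod.natCast_self]
    · intro hcon
      have := congrFun hcon ⟨0, hs⟩
      exact one_ne_zero this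
  set h₀ : G := (a₀, b₀) with hh₀def
  have hh₀ : addOrderOf h₀ = p * q := by
    rw [Prod.addOrderOf]
    show Nat.lcm (addOrderOf a₀) (addOrderOf b₀) = p * q
    rw [ha₀, hb₀]
    exact Nat.Coprime.lcm_eq_mul ((Nat.coprime_primes hp hq).2 hpqne)
  have hd1 : ∀ a : Fin r → ZMod p, addOrderOf a ∣ p := by
    intro a
    rw [addOrderOf_dvd_iff_nsmul_eq_zero]
    funext i
    show p • a i = 0
    rw [nsmul_eq_mul, ZMod.natCast_self, zero_mul]
  have hd2 : ∀ b : Fin s → ZMod q, addOrderOf b ∣ q := by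
    intro b
    rw [addOrderOf_dvd_iff_nsmul_eq_zero]
    funext i
    show q • b i = 0
    rw [nsmul_eq_mul, ZMod.natCast_self, zero_mul]
  have hord : ∀ g : G, addOrderOf g = 1 ∨ addOrderOf g = p ∨ addOrderOf g = q ∨
      addOrderOf g = p * q := by
    intro g
    rw [Prod.addOrderOf]
    rcases hp.eq_one_or_self_of_dvd _ (hd1 g.1) with h1 | h1 <;>
      rcases hq.eq_one_or_self_of_dvd _ (hd2 g.2) with h2 | h2 <;> rw [h1, h2]
    · left; simp
    · right; right; left; simp [Nat.lcm_one_left]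
    · right; left; simp [Nat.lcm_one_right]
    · right; right; right
      exact Nat.Coprime.lcm_eq_mul ((Nat.coprime_primes hp hq).2 hpqne)
  have hsnd0 : ∀ g : G, addOrderOf g = p → g.2 = 0 := by
    intro g hgp
    have hdvd : addOrderOf g.2 ∣ p := by
      have h' : addOrderOf g.2 ∣ addOrderOf g := addOrderOf_snd_dvd_addOrderOf
      rwa [hgp] at h'
    rcases hq.eq_one_or_self_of_dvd _ (hd2 g.2) with h2 | h2
    · exact AddMonoid.addOrderOf_eq_one_iff.mp h2
    · rw [h2] at hdvd
      rcases hp.eq_one_or_self_of_dvd _ hdvd with h | h <;> omega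
  have hfst0 : ∀ g : G, addOrderOf g = q → g.1 = 0 := by
    intro g hgq
    have hdvd : addOrderOf g.1 ∣ q := by
      have h' : addOrderOf g.1 ∣ addOrderOf g := addOrderOf_fst_dvd_addOrderOf
      rwa [hgq] at h'
    rcases hp.eq_one_or_self_of_dvd _ (hd1 g.1) with h1 | h1
    · exact AddMonoid.addOrderOf_eq_one_iff.mp h1
    · rw [h1] at hdvd
      rcases hq.eq_one_or_self_of_dvd _ hdvd with h | h <;> omega
  have hcast : ((p * q : ℕ) : ℚ) = (p : ℚ) * q := by push_cast; ring
  have hpne : (p : ℚ) ≠ 0 := Nat.cast_ne_zero.2 (by omega)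
  have hqne : (q : ℚ) ≠ 0 := Nat.cast_ne_zero.2 (by omega)
  have hpq4 : 2 * 2 ≤ p * q := Nat.mul_le_mul hp2 hq2
  intro x hx
  obtain ⟨S, ⟨hS0, hsum, hmin⟩, rfl⟩ := hx
  by_cases hbig : ∃ u ∈ S, addOrderOf u = p * q
  · obtain ⟨u, huS, hordu⟩ := hbig
    refine ⟨crossNum (S.erase u), ⟨S.erase u, ?_, ?_, rfl⟩, ?_⟩
    · intro h
      have hSu : S = {u} := by rw [← Multiset.cons_erase huS, h]; rfl
      rw [hSu] at hsum
      simp at hsum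
      rw [hsum] at hordu
      simp at hordu
      omega
    · intro U hU hU0
      exact hmin U (lt_of_le_of_lt hU (Multiset.erase_lt.2 huS)) hU0
    · conv_lhs => rw [← Multiset.cons_erase huS]
      rw [crossNum_cons, hordu, hcast]
  · have hsmall : ∀ g ∈ S, addOrderOf g = 1 ∨ addOrderOf g = p ∨ addOrderOf g = q := by
      intro g hg
      rcases hord g with h | h | h | h
      · exact Or.inl h
      · exact Or.inr (Or.inl h)
      · exact Or.inr (Or.inr h)
      · exact absurd ⟨g, hg, h⟩ hbig
    by_cases h0 : (0 : G) ∈ S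
    · have hSeq : S = {0} := by
        by_contra hne
        exact hmin {0} (lt_of_le_of_ne (Multiset.singleton_le.2 h0) (fun e => hne e.symm))
          (by simp) (by simp)
      obtain ⟨hT0, hTzsf⟩ := zsf_aux S ⟨hS0, hsum, hmin⟩ 0 h0 (AddMonoidHom.id _)
        (by intro x hx; rw [hSeq, Multiset.mem_singleton] at hx; simp [hx]) h₀ (p * q)
        (by omega) (by simpa using hh₀)
      refine ⟨_, ⟨_, hT0, hTzsf, rfl⟩, ?_⟩
      rw [hSeq]
      have he : ({0} : Multiset G).erase 0 = 0 := by simp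
      have e1 : crossNum ({0} : Multiset G) = 1 := by simp [crossNum]
      rw [he, e1, zero_add, crossNum_replicate, hh₀, hcast]
      have hc : ((p * q - 1 : ℕ) : ℚ) = (p : ℚ) * q - 1 := by
        rw [Nat.cast_sub (by omega)]
        push_cast
        ring
      rw [hc]
      field_simp
      ring
    · have hpq' : ∀ g ∈ S, addOrderOf g = p ∨ addOrderOf g = q := by
        intro g hg
        rcases hsmall g hg with h | h | h
        · exact absurd ((AddMonoid.addOrderOf_eq_one_iff.mp h) ▸ hg) h0
        · exact Or.inl h
        · exact Or.inr h
      have hkey : (∀ g ∈ S, addOrderOf g = p) ∨ (∀ g ∈ S, addOrderOf g = q) := by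
        by_contra hcon
        push_neg at hcon
        obtain ⟨⟨g1, hg1S, hg1⟩, ⟨g2, hg2S, hg2⟩⟩ := hcon
        have hg2p : addOrderOf g2 = p := (hpq' g2 hg2S).resolve_right hg2
        set Sp := S.filter (fun g => addOrderOf g = p) with hSpdef
        set Sq := S.filter (fun g => ¬ addOrderOf g = p) with hSqdef
        have hSple : Sp ≤ S := Multiset.filter_le _ _
        have hSpne : Sp ≠ S := by
          intro e
          have : g1 ∈ Sp := e ▸ hg1S
          exact hg1 (Multiset.mem_filter.1 this).2
        have hSp0 : Sp ≠ 0 := by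
          intro e
          have : g2 ∈ Sp := Multiset.mem_filter.2 ⟨hg2S, hg2p⟩
          rw [e] at this
          exact absurd this (Multiset.notMem_zero _)
        have hsumsplit : Sp.sum + Sq.sum = 0 := by
          rw [← Multiset.sum_add, Multiset.filter_add_not]
          exact hsum
        have hSp2 : Sp.sum.2 = 0 := by
          rw [Multiset.snd_sum]
          apply Multiset.sum_eq_zero
          intro x hx
          rcases Multiset.mem_map.1 hx with ⟨y, hy, rfl⟩
          exact hsnd0 y (Multiset.mem_filter.1 hy).2
        have hSq1 : Sq.sum.1 = 0 := by
          rw [Multiset.fst_sum]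
          apply Multiset.sum_eq_zero
          intro x hx
          rcases Multiset.mem_map.1 hx with ⟨y, hy, rfl⟩
          have hy' := Multiset.mem_filter.1 hy
          exact hfst0 y ((hpq' y hy'.1).resolve_left hy'.2)
        have hSpsum : Sp.sum = 0 := by
          have h1 := congrArg Prod.fst hsumsplit
          simp only [Prod.fst_add, hSq1, add_zero, Prod.fst_zero] at h1
          exact Prod.ext h1 hSp2
        exact hmin Sp (lt_of_le_of_ne hSple hSpne) hSp0 hSpsum
      obtain ⟨g, hgS⟩ := Multiset.exists_mem_of_ne_zero hS0
      rcases hkey with hall | hall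
      · obtain ⟨hT0, hTzsf⟩ := zsf_aux S ⟨hS0, hsum, hmin⟩ g hgS
          (AddMonoidHom.snd _ _) (fun x hx => hsnd0 x (hall x hx)) h₀ q hq2
          (by simpa using hb₀)
        refine ⟨_, ⟨_, hT0, hTzsf, rfl⟩, ?_⟩
        conv_lhs => rw [← Multiset.cons_erase hgS]
        rw [crossNum_cons, hall g hgS, crossNum_add, crossNum_replicate, hh₀, hcast]
        have hc : ((q - 1 : ℕ) : ℚ) = (q : ℚ) - 1 := by
          rw [Nat.cast_sub (by omega)]
          simp
        rw [hc]
        field_simp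
        ring
      · obtain ⟨hT0, hTzsf⟩ := zsf_aux S ⟨hS0, hsum, hmin⟩ g hgS
          (AddMonoidHom.fst _ _) (fun x hx => hfst0 x (hall x hx)) h₀ p hp2
          (by simpa using ha₀)
        refine ⟨_, ⟨_, hT0, hTzsf, rfl⟩, ?_⟩
        conv_lhs => rw [← Multiset.cons_erase hgS]
        rw [crossNum_cons, hall g hgS, crossNum_add, crossNum_replicate, hh₀, hcast]
        have hc : ((p - 1 : ℕ) : ℚ) = (p : ℚ) - 1 := by
          rw [Nat.cast_sub (by omega)]
          simp
        rw [hc]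
        field_simp
        ring
end
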